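/- Let d ≥ 2 and q₁,…,q_d ≥ 2 be integers. The range of Q̂ is a compact interval: there exist real numbers m ≤ M with {Q̂(t) : t ∈ ℝ^d} = [m, M], where M = Q̂(0,…,0) = (Σ_{i≠j}√(q_i q_j))/D and m ≥ −1/(d−1). -/
import Mathlib

open Finset Real
set_option maxHeartbeats 1000000

/-- `Q̂(t) = (1/D)·Σ_{i≠j} √(q_i q_j)·cos(t_i − t_j)`, where `D = (d−1)(q₁+⋯+q_d)`. -/
noncomputable def Qhat (d : ℕ) (q : Fin d → ℕ) (t : Fin d → ℝ) : ℝ :=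
  (1 / (((d : ℝ) - 1) * ∑ j, (q j : ℝ))) *
    ∑ p ∈ Finset.univ.offDiag,
      Real.sqrt ((q p.1 : ℝ) * (q p.2 : ℝ)) * Real.cos (t p.1 - t p.2)

lemma aux_sum_sq (d : ℕ) (a c s : Fin d → ℝ) :
    ∑ p ∈ Finset.univ ×ˢ Finset.univ, (a p.1 * a p.2) * (c p.1 * c p.2 + s p.1 * s p.2)
      = (∑ i, a i * c i) ^ 2 + (∑ i, a i * s i) ^ 2 := by
  rw [Finset.sum_product, sq, sq, Finset.sum_mul_sum, Finset.sum_mul_sum,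
    ← Finset.sum_add_distrib]
  refine Finset.sum_congr rfl fun i _ => ?_
  rw [← Finset.sum_add_distrib]
  exact Finset.sum_congr rfl fun j _ => by ring

lemma inner_lower (d : ℕ) (q : Fin d → ℕ) (t : Fin d → ℝ) :
    -(∑ j, (q j : ℝ)) ≤ ∑ p ∈ Finset.univ.offDiag,
      Real.sqrt ((q p.1 : ℝ) * (q p.2 : ℝ)) * Real.cos (t p.1 - t p.2) := by
  have hsplit : ∑ p ∈ (Finset.univ : Finset (Fin d)) ×ˢ Finset.univ,
      Real.sqrt ((q p.1 : ℝ) * (q p.2 : ℝ)) * Real.cos (t p.1 - t p.2)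
      = ∑ p ∈ (Finset.univ : Finset (Fin d)).diag,
          Real.sqrt ((q p.1 : ℝ) * (q p.2 : ℝ)) * Real.cos (t p.1 - t p.2)
        + ∑ p ∈ (Finset.univ : Finset (Fin d)).offDiag,
          Real.sqrt ((q p.1 : ℝ) * (q p.2 : ℝ)) * Real.cos (t p.1 - t p.2) := by
    rw [← Finset.sum_union (Finset.disjoint_diag_offDiag _), Finset.diag_union_offDiag]
  have hdiag : ∑ p ∈ (Finset.univ : Finset (Fin d)).diag,
      Real.sqrt ((q p.1 : ℝ) * (q p.2 : ℝ)) * Real.cos (t p.1 - t p.2)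
      = ∑ j, (q j : ℝ) := by
    rw [Finset.sum_diag]
    refine Finset.sum_congr rfl fun i _ => ?_
    rw [sub_self, Real.cos_zero, mul_one, Real.sqrt_mul_self (by positivity : (0:ℝ) ≤ (q i : ℝ))]
  have hfull : 0 ≤ ∑ p ∈ (Finset.univ : Finset (Fin d)) ×ˢ Finset.univ,
      Real.sqrt ((q p.1 : ℝ) * (q p.2 : ℝ)) * Real.cos (t p.1 - t p.2) := by
    have : ∑ p ∈ (Finset.univ : Finset (Fin d)) ×ˢ Finset.univ,
        Real.sqrt ((q p.1 : ℝ) * (q p.2 : ℝ)) * Real.cos (t p.1 - t p.2)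
        = (∑ i, Real.sqrt (q i) * Real.cos (t i)) ^ 2
          + (∑ i, Real.sqrt (q i) * Real.sin (t i)) ^ 2 := by
      rw [← aux_sum_sq d (fun i => Real.sqrt (q i)) (fun i => Real.cos (t i))
        (fun i => Real.sin (t i))]
      refine Finset.sum_congr rfl fun p _ => ?_
      rw [Real.sqrt_mul (by positivity), Real.cos_sub]
    rw [this]; positivity
  linarith

lemma Qhat_congr (d : ℕ) (q : Fin d → ℕ) (t s : Fin d → ℝ)
    (h : ∀ i j, Real.cos (t i - t j) = Real.cos (s i - s j)) :
    Qhat d q t = Qhat d q s := by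
  unfold Qhat
  congr 1
  exact Finset.sum_congr rfl fun p _ => by rw [h]

lemma Qhat_le_zero (d : ℕ) (hd : 2 ≤ d) (q : Fin d → ℕ) (t : Fin d → ℝ) :
    Qhat d q t ≤ Qhat d q 0 := by
  unfold Qhat
  have hc : (0:ℝ) ≤ 1 / (((d : ℝ) - 1) * ∑ j, (q j : ℝ)) := by
    have h1 : (1:ℝ) ≤ (d:ℝ) := by exact_mod_cast Nat.one_le_of_lt hd
    have h2 : (0:ℝ) ≤ ∑ j, (q j : ℝ) := Finset.sum_nonneg fun j _ => by positivity
    exact one_div_nonneg.mpr (mul_nonneg (by linarith) h2)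
  refine mul_le_mul_of_nonneg_left (Finset.sum_le_sum fun p _ => ?_) hc
  simp only [Pi.zero_apply, sub_self]
  exact mul_le_mul_of_nonneg_left (by rw [Real.cos_zero]; exact Real.cos_le_one _)
    (Real.sqrt_nonneg _)

lemma Qhat_lower (d : ℕ) (hd : 2 ≤ d) (q : Fin d → ℕ) (hq : ∀ j, 2 ≤ q j)
    (t : Fin d → ℝ) : -(1 / ((d : ℝ) - 1)) ≤ Qhat d q t := by
  have hd1 : (0:ℝ) < (d:ℝ) - 1 := by
    have : (2:ℝ) ≤ (d:ℝ) := by exact_mod_cast hd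
    linarith
  have hqpos : (0:ℝ) < ∑ j, (q j : ℝ) := by
    refine Finset.sum_pos (fun j _ => by have := hq j; positivity) ?_
    exact Finset.univ_nonempty_iff.mpr (Fin.pos_iff_nonempty.mp (by omega))
  have hc : (0:ℝ) < 1 / (((d : ℝ) - 1) * ∑ j, (q j : ℝ)) := by positivity
  have := mul_le_mul_of_nonneg_left (inner_lower d q t) hc.le
  unfold Qhat
  refine le_trans (le_of_eq ?_) this
  field_simp

/-- The range of `Q̂` is a compact interval `[m, M]` with
`M = Q̂(0) = (Σ_{i≠j}√(q_i q_j))/D` and `m ≥ −1/(d−1)`. -/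
theorem Qhat_range_interval (d : ℕ) (hd : 2 ≤ d) (q : Fin d → ℕ) (hq : ∀ j, 2 ≤ q j) :
    ∃ m M : ℝ, m ≤ M ∧ Set.range (Qhat d q) = Set.Icc m M ∧
      M = Qhat d q 0 ∧
      M = (∑ p ∈ Finset.univ.offDiag, Real.sqrt ((q p.1 : ℝ) * (q p.2 : ℝ))) /
            (((d : ℝ) - 1) * ∑ j, (q j : ℝ)) ∧
      -(1 / ((d : ℝ) - 1)) ≤ m := by
  set K : Set (Fin d → ℝ) := Set.Icc 0 (fun _ => 2 * π) with hK
  have hπ : (0:ℝ) ≤ 2 * π := by positivity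
  have h0K : (0 : Fin d → ℝ) ∈ K := by
    constructor <;> intro i <;> simp [hπ]
  have hcont : Continuous (Qhat d q) := by
    apply Continuous.mul continuous_const
    refine continuous_finset_sum _ fun p _ => Continuous.mul continuous_const ?_
    exact Real.continuous_cos.comp ((continuous_apply p.1).sub (continuous_apply p.2))
  -- range equals image of the compact cube
  have hrange : Set.range (Qhat d q) = Qhat d q '' K := by
    apply Set.Subset.antisymm
    · rintro _ ⟨t, rfl⟩
      refine ⟨fun i => Int.fract (t i / (2 * π)) * (2 * π), ?_, ?_⟩
      · constructor <;> intro i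
        · simp only [Pi.zero_apply]
          exact mul_nonneg (Int.fract_nonneg _) hπ
        · exact mul_le_of_le_one_left hπ (Int.fract_lt_one _).le
      · have h2π : (2 * π) ≠ 0 := by positivity
        refine Qhat_congr d q _ t fun i j => ?_
        have e : Int.fract (t i / (2 * π)) * (2 * π) - Int.fract (t j / (2 * π)) * (2 * π)
            = (t i - t j) + ((⌊t j / (2 * π)⌋ - ⌊t i / (2 * π)⌋ : ℤ) : ℝ) * (2 * π) := by
          rw [Int.fract, Int.fract, sub_mul, sub_mul, div_mul_cancel₀ _ h2π,
            div_mul_cancel₀ _ h2π]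
          push_cast
          ring
        rw [e, Real.cos_add_int_mul_two_pi]
    · rintro _ ⟨t, _, rfl⟩
      exact ⟨t, rfl⟩
  have hKcomp : IsCompact K := isCompact_Icc
  have hScomp : IsCompact (Qhat d q '' K) := hKcomp.image hcont
  have hSconn : IsConnected (Qhat d q '' K) := by
    refine ⟨⟨Qhat d q 0, Set.mem_image_of_mem _ h0K⟩, ?_⟩
    exact ((convex_Icc (0 : Fin d → ℝ) (fun _ => 2 * π)).isPreconnected).image _
      hcont.continuousOn
  have hIcc := eq_Icc_of_connected_compact hSconn hScomp
  set m := sInf (Qhat d q '' K) with hm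
  set M := sSup (Qhat d q '' K) with hM
  have h0mem : Qhat d q 0 ∈ Set.Icc m M := by
    rw [← hIcc]; exact Set.mem_image_of_mem _ h0K
  have hmM : m ≤ M := le_trans h0mem.1 h0mem.2
  have hMmem : M ∈ Set.Icc m M := ⟨hmM, le_refl M⟩
  have hmmem : m ∈ Set.Icc m M := ⟨le_refl m, hmM⟩
  rw [← hIcc] at hMmem hmmem
  obtain ⟨tM, _, htM⟩ := hMmem
  obtain ⟨tm, _, htm⟩ := hmmem
  have hMeq : M = Qhat d q 0 :=
    le_antisymm (htM ▸ Qhat_le_zero d hd q tM) h0mem.2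
  refine ⟨m, M, hmM, by rw [hrange, hIcc], hMeq, ?_, ?_⟩
  · rw [hMeq]
    unfold Qhat
    rw [one_div, inv_mul_eq_div]
    congr 1
    refine Finset.sum_congr rfl fun p _ => ?_
    simp
  · rw [← htm]
    exact Qhat_lower d hd q hq tm
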